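/- arXiv:2402.03975 — 3 statements merged into one kernel-verified Lean document; each statement's English description precedes it below -/
import Mathlib

section
/- Suppose (λ,u) ∈ ℝ × ℝ^n is a solution of the ergodic equation of a mean-payoff game and the pair of policies (σ,τ) is induced by the bias u. Then (σ,τ) is optimal: for every pair of policies (σ',τ') and every initial vertex i ∈ [n], g_i(σ',τ) ≤ λ ≤ g_i(σ,τ'). -/
open MeasureTheory

/-- Weight of a pair of vertices: the weight of the corresponding edge if it exists, `0`
otherwise. -/
noncomputable def wt {n : ℕ} (E : Finset (Fin n × Fin n))
    (r : {e : Fin n × Fin n // e ∈ E} → ℝ) (p : Fin n × Fin n) : ℝ :=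
  if h : p ∈ E then r ⟨p, h⟩ else 0

/-- The set of values `r_{ij} + u_j` over the edges `(i,j)` going out of `i`. -/
def outVals {n : ℕ} (E : Finset (Fin n × Fin n)) (r : {e : Fin n × Fin n // e ∈ E} → ℝ)
    (u : Fin n → ℝ) (i : Fin n) : Set ℝ :=
  {v | ∃ j : Fin n, (i, j) ∈ E ∧ v = wt E r (i, j) + u j}

/-- `(λ, u)` solves the ergodic equation:
`λ + u i = max_{(i,j) ∈ E} (r_{ij} + u_j)` for `i ∈ VMax` and
`λ + u i = min_{(i,j) ∈ E} (r_{ij} + u_j)` for `i ∉ VMax` (i.e. `i ∈ VMin`). -/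
def IsErgodicSol {n : ℕ} (E : Finset (Fin n × Fin n)) (VMax : Finset (Fin n))
    (r : {e : Fin n × Fin n // e ∈ E} → ℝ) (lam : ℝ) (u : Fin n → ℝ) : Prop :=
  ∀ i : Fin n,
    (i ∈ VMax → IsGreatest (outVals E r u i) (lam + u i)) ∧
    (i ∉ VMax → IsLeast (outVals E r u i) (lam + u i))

/-- A policy of player Max. -/
def IsMaxPolicy {n : ℕ} (E : Finset (Fin n × Fin n)) (VMax : Finset (Fin n))
    (σ : {i : Fin n // i ∈ VMax} → Fin n) : Prop :=
  ∀ i, (i.1, σ i) ∈ E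

/-- A policy of player Min. -/
def IsMinPolicy {n : ℕ} (E : Finset (Fin n × Fin n)) (VMax : Finset (Fin n))
    (τ : {i : Fin n // i ∉ VMax} → Fin n) : Prop :=
  ∀ i, (i.1, τ i) ∈ E

/-- The successor map of the subgraph `G^{σ,τ}` in which every vertex keeps only the edge
chosen by the corresponding policy. -/
def combine {n : ℕ} (VMax : Finset (Fin n)) (σ : {i : Fin n // i ∈ VMax} → Fin n)
    (τ : {i : Fin n // i ∉ VMax} → Fin n) : Fin n → Fin n :=
  fun i => if h : i ∈ VMax then σ ⟨i, h⟩ else τ ⟨i, h⟩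

/-- The bias `u` induces the pair of policies `(σ, τ)`: at every vertex, the edge chosen by
the policy achieves the maximum (for Max) or minimum (for Min) of `r_{ij} + u_j`. -/
def Induces {n : ℕ} (E : Finset (Fin n × Fin n)) (VMax : Finset (Fin n))
    (r : {e : Fin n × Fin n // e ∈ E} → ℝ) (u : Fin n → ℝ)
    (σ : {i : Fin n // i ∈ VMax} → Fin n) (τ : {i : Fin n // i ∉ VMax} → Fin n) : Prop :=
  IsMaxPolicy E VMax σ ∧ IsMinPolicy E VMax τ ∧
  (∀ i : {i : Fin n // i ∈ VMax},
      IsGreatest (outVals E r u i.1) (wt E r (i.1, σ i) + u (σ i))) ∧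
  (∀ i : {i : Fin n // i ∉ VMax},
      IsLeast (outVals E r u i.1) (wt E r (i.1, τ i) + u (τ i)))

/-- The mean payoff `g_i` of the play starting at `i` following the successor map `f`. -/
noncomputable def payoff {n : ℕ} (E : Finset (Fin n × Fin n))
    (r : {e : Fin n × Fin n // e ∈ E} → ℝ) (f : Fin n → Fin n) (i : Fin n) : ℝ :=
  Filter.liminf
    (fun N : ℕ => (N : ℝ)⁻¹ * ∑ t ∈ Finset.range N, wt E r (f^[t] i, f^[t + 1] i))
    Filter.atTop

/-- `x` lies on a directed cycle of the functional graph of `f`. -/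
def IsPeriodicVertex {n : ℕ} (f : Fin n → Fin n) (x : Fin n) : Prop :=
  ∃ k : ℕ, 0 < k ∧ f^[k] x = x

/-- The functional graph of `f` has exactly one directed cycle. -/
def HasUniqueCycle {n : ℕ} (f : Fin n → Fin n) : Prop :=
  ∀ x y : Fin n, IsPeriodicVertex f x → IsPeriodicVertex f y → ∃ k : ℕ, f^[k] x = y

/-- `(σ, τ)` is a bias-induced pair of policies of the MPG with weights `r`. -/
def BiasInduced {n : ℕ} (E : Finset (Fin n × Fin n)) (VMax : Finset (Fin n))
    (r : {e : Fin n × Fin n // e ∈ E} → ℝ)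
    (σ : {i : Fin n // i ∈ VMax} → Fin n) (τ : {i : Fin n // i ∉ VMax} → Fin n) : Prop :=
  ∃ lam u, IsErgodicSol E VMax r lam u ∧ Induces E VMax r u σ τ

/-- `(σ, τ) ∈ Ξ`: a pair of policies whose subgraph `G^{σ,τ}` has exactly one cycle. -/
def InXi {n : ℕ} (E : Finset (Fin n × Fin n)) (VMax : Finset (Fin n))
    (σ : {i : Fin n // i ∈ VMax} → Fin n) (τ : {i : Fin n // i ∉ VMax} → Fin n) : Prop :=
  IsMaxPolicy E VMax σ ∧ IsMinPolicy E VMax τ ∧ HasUniqueCycle (combine VMax σ τ)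

/-- `P^{σ,τ}`: the set of weight vectors for which `(σ, τ)` is the unique pair of
bias-induced policies. -/
def Pcell {n : ℕ} (E : Finset (Fin n × Fin n)) (VMax : Finset (Fin n))
    (σ : {i : Fin n // i ∈ VMax} → Fin n) (τ : {i : Fin n // i ∉ VMax} → Fin n) :
    Set ({e : Fin n × Fin n // e ∈ E} → ℝ) :=
  {r | BiasInduced E VMax r σ τ ∧
    ∀ σ' τ', BiasInduced E VMax r σ' τ' → σ' = σ ∧ τ' = τ}

/-- `U := ∪_{(σ,τ) ∈ Ξ} P^{σ,τ}`. -/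
def Ucell {n : ℕ} (E : Finset (Fin n × Fin n)) (VMax : Finset (Fin n)) :
    Set ({e : Fin n × Fin n // e ∈ E} → ℝ) :=
  ⋃ σ, ⋃ τ, ⋃ (_ : InXi E VMax σ τ), Pcell E VMax σ τ

/-- `(λ, u)` solves the zero-player (fixed policies) equation on the functional graph of
`f`. -/
def IsZeroPlayerSol {n : ℕ} (E : Finset (Fin n × Fin n)) (f : Fin n → Fin n)
    (r : {e : Fin n × Fin n // e ∈ E} → ℝ) (lam : ℝ) (u : Fin n → ℝ) : Prop :=
  ∀ i : Fin n, lam + u i = wt E r (i, f i) + u (f i)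

/-- `(λ, u)` is the normalized solution of the zero-player equation: additionally `u`
vanishes at the smallest-index vertex of the cycle. For `(σ,τ) ∈ Ξ`, this characterizes
`(λ^{σ,τ}(r), u^{σ,τ}(r))`. -/
def IsNormalizedSol {n : ℕ} (E : Finset (Fin n × Fin n)) (f : Fin n → Fin n)
    (r : {e : Fin n × Fin n // e ∈ E} → ℝ) (lam : ℝ) (u : Fin n → ℝ) : Prop :=
  IsZeroPlayerSol E f r lam u ∧
  ∃ k : Fin n, IsPeriodicVertex f k ∧ (∀ l, IsPeriodicVertex f l → k ≤ l) ∧ u k = 0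

/-- The graph is ergodic: the ergodic equation is solvable for every choice of weights. -/
def IsErgodicGraph {n : ℕ} (E : Finset (Fin n × Fin n)) (VMax : Finset (Fin n)) : Prop :=
  ∀ r : {e : Fin n × Fin n // e ∈ E} → ℝ, ∃ lam u, IsErgodicSol E VMax r lam u


/-!
If `(λ, u)` solves the ergodic equation and Min follows the policy `τ` induced by `u`, then
whatever Max plays, every step of the play satisfies `r_{x_t x_{t+1}} + u_{x_{t+1}} ≤ λ + u_{x_t}`.
Summing these inequalities telescopes the bias: `∑_{t<N} r_{x_t x_{t+1}} ≤ Nλ + u_{x_0} - u_{x_N}`,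
and since `u` is bounded, the averages are at most `λ + O(1/N)`, so their liminf is at most `λ`.
The bound `λ ≤ g_i(σ, τ')` is symmetric.
-/

open Finset Filter Topology

section Cesaro

variable {a v : ℕ → ℝ} {c M C : ℝ}

theorem abs_cesaro_le (ha : ∀ t, |a t| ≤ M) (N : ℕ) :
    |(N : ℝ)⁻¹ * ∑ t ∈ range N, a t| ≤ M := by
  rcases N.eq_zero_or_pos with rfl | hN
  · simpa using (abs_nonneg (a 0)).trans (ha 0)
  rw [abs_mul, abs_inv, Nat.abs_cast, inv_mul_le_iff₀ (by positivity)]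
  calc |∑ t ∈ range N, a t| ≤ ∑ t ∈ range N, |a t| := abs_sum_le_sum_abs _ _
    _ ≤ ∑ _t ∈ range N, M := sum_le_sum fun t _ => ha t
    _ = N * M := by simp

theorem sum_range_le_of_add_le (h : ∀ t, a t + v (t + 1) ≤ c + v t) (N : ℕ) :
    ∑ t ∈ range N, a t ≤ N * c + (v 0 - v N) := by
  calc ∑ t ∈ range N, a t ≤ ∑ t ∈ range N, (c - (v (t + 1) - v t)) :=
        sum_le_sum fun t _ => by linarith [h t]
    _ = N * c + (v 0 - v N) := by
        rw [sum_sub_distrib, sum_const, card_range, nsmul_eq_mul, sum_range_sub (fun t => v t)]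
        ring

theorem le_sum_range_of_le_add (h : ∀ t, c + v t ≤ a t + v (t + 1)) (N : ℕ) :
    N * c + (v 0 - v N) ≤ ∑ t ∈ range N, a t := by
  calc N * c + (v 0 - v N) = ∑ t ∈ range N, (c - (v (t + 1) - v t)) := by
        rw [sum_sub_distrib, sum_const, card_range, nsmul_eq_mul, sum_range_sub (fun t => v t)]
        ring
    _ ≤ ∑ t ∈ range N, a t := sum_le_sum fun t _ => by linarith [h t]

theorem liminf_cesaro_le_of_add_le (ha : ∀ t, |a t| ≤ M) (hv : ∀ t, |v t| ≤ C)
    (h : ∀ t, a t + v (t + 1) ≤ c + v t) :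
    liminf (fun N : ℕ => (N : ℝ)⁻¹ * ∑ t ∈ range N, a t) atTop ≤ c := by
  have hlim : Tendsto (fun N : ℕ => c + 2 * C / N) atTop (𝓝 c) := by
    simpa using (tendsto_const_div_atTop_nhds_zero_nat (2 * C)).const_add c
  have hbound : ∀ᶠ N : ℕ in atTop, (N : ℝ)⁻¹ * ∑ t ∈ range N, a t ≤ c + 2 * C / N := by
    filter_upwards [eventually_gt_atTop 0] with N hN
    rw [inv_mul_le_iff₀ (by positivity), mul_add, mul_div_cancel₀ _ (by positivity)]
    linarith [sum_range_le_of_add_le h N, abs_le.1 (hv 0), abs_le.1 (hv N)]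
  calc _ ≤ liminf (fun N : ℕ => c + 2 * C / N) atTop :=
        liminf_le_liminf hbound
          (isBoundedUnder_of ⟨-M, fun N => (abs_le.1 (abs_cesaro_le ha N)).1⟩)
          hlim.isBoundedUnder_le.isCoboundedUnder_ge
    _ = c := hlim.liminf_eq

theorem le_liminf_cesaro_of_le_add (ha : ∀ t, |a t| ≤ M) (hv : ∀ t, |v t| ≤ C)
    (h : ∀ t, c + v t ≤ a t + v (t + 1)) :
    c ≤ liminf (fun N : ℕ => (N : ℝ)⁻¹ * ∑ t ∈ range N, a t) atTop := by
  have hlim : Tendsto (fun N : ℕ => c - 2 * C / N) atTop (𝓝 c) := by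
    simpa using (tendsto_const_div_atTop_nhds_zero_nat (2 * C)).const_sub c
  have hbound : ∀ᶠ N : ℕ in atTop, c - 2 * C / N ≤ (N : ℝ)⁻¹ * ∑ t ∈ range N, a t := by
    filter_upwards [eventually_gt_atTop 0] with N hN
    rw [le_inv_mul_iff₀ (by positivity), mul_sub, mul_div_cancel₀ _ (by positivity)]
    linarith [le_sum_range_of_le_add h N, abs_le.1 (hv 0), abs_le.1 (hv N)]
  calc c = liminf (fun N : ℕ => c - 2 * C / N) atTop := hlim.liminf_eq.symm
    _ ≤ _ :=
        liminf_le_liminf hbound hlim.isBoundedUnder_ge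
          (isBoundedUnder_of ⟨M, fun N => (abs_le.1 (abs_cesaro_le ha N)).2⟩).isCoboundedUnder_ge

end Cesaro

section Payoff

variable {n : ℕ} {E : Finset (Fin n × Fin n)} {r : {e : Fin n × Fin n // e ∈ E} → ℝ}
  {f : Fin n → Fin n} {lam : ℝ} {u : Fin n → ℝ}

theorem payoff_le_of_forall_wt_add_le (h : ∀ i, wt E r (i, f i) + u (f i) ≤ lam + u i)
    (i : Fin n) : payoff E r f i ≤ lam := by
  obtain ⟨M, hM⟩ := Finite.exists_le fun p => |wt E r p|
  obtain ⟨C, hC⟩ := Finite.exists_le fun j => |u j|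
  refine liminf_cesaro_le_of_add_le (v := fun t => u (f^[t] i)) (fun t => hM _)
    (fun t => hC _) fun t => ?_
  simpa only [Function.iterate_succ_apply'] using h (f^[t] i)

theorem le_payoff_of_forall_le_wt_add (h : ∀ i, lam + u i ≤ wt E r (i, f i) + u (f i))
    (i : Fin n) : lam ≤ payoff E r f i := by
  obtain ⟨M, hM⟩ := Finite.exists_le fun p => |wt E r p|
  obtain ⟨C, hC⟩ := Finite.exists_le fun j => |u j|
  refine le_liminf_cesaro_of_le_add (v := fun t => u (f^[t] i)) (fun t => hM _)
    (fun t => hC _) fun t => ?_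
  simpa only [Function.iterate_succ_apply'] using h (f^[t] i)

end Payoff

namespace IsErgodicSol

variable {n : ℕ} {E : Finset (Fin n × Fin n)} {VMax : Finset (Fin n)}
  {r : {e : Fin n × Fin n // e ∈ E} → ℝ} {lam : ℝ} {u : Fin n → ℝ}
  {σ : {i : Fin n // i ∈ VMax} → Fin n} {τ : {i : Fin n // i ∉ VMax} → Fin n}

theorem wt_combine_add_le (hsol : IsErgodicSol E VMax r lam u) (hσ : IsMaxPolicy E VMax σ)
    (hτ : ∀ i : {i : Fin n // i ∉ VMax},
      IsLeast (outVals E r u i.1) (wt E r (i.1, τ i) + u (τ i)))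
    (j : Fin n) :
    wt E r (j, combine VMax σ τ j) + u (combine VMax σ τ j) ≤ lam + u j := by
  unfold combine
  split_ifs with hj
  · exact ((hsol j).1 hj).2 ⟨_, hσ ⟨j, hj⟩, rfl⟩
  · exact ((hτ ⟨j, hj⟩).unique ((hsol j).2 hj)).le

theorem le_wt_combine_add (hsol : IsErgodicSol E VMax r lam u)
    (hσ : ∀ i : {i : Fin n // i ∈ VMax},
      IsGreatest (outVals E r u i.1) (wt E r (i.1, σ i) + u (σ i)))
    (hτ : IsMinPolicy E VMax τ) (j : Fin n) :
    lam + u j ≤ wt E r (j, combine VMax σ τ j) + u (combine VMax σ τ j) := by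
  unfold combine
  split_ifs with hj
  · exact (((hsol j).1 hj).unique (hσ ⟨j, hj⟩)).le
  · exact ((hsol j).2 hj).2 ⟨_, hτ ⟨j, hj⟩, rfl⟩

end IsErgodicSol

theorem stmt6_general (n : ℕ) (E : Finset (Fin n × Fin n)) (VMax : Finset (Fin n))
    (r : {e : Fin n × Fin n // e ∈ E} → ℝ) (lam : ℝ) (u : Fin n → ℝ)
    (hsol : IsErgodicSol E VMax r lam u)
    (σ : {i : Fin n // i ∈ VMax} → Fin n) (τ : {i : Fin n // i ∉ VMax} → Fin n)
    (hind : Induces E VMax r u σ τ) :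
    ∀ σ' τ', IsMaxPolicy E VMax σ' → IsMinPolicy E VMax τ' → ∀ i : Fin n,
      payoff E r (combine VMax σ' τ) i ≤ lam ∧
      lam ≤ payoff E r (combine VMax σ τ') i := by
  obtain ⟨-, -, hσ, hτ⟩ := hind
  intro σ' τ' hσ' hτ' i
  exact ⟨payoff_le_of_forall_wt_add_le (hsol.wt_combine_add_le hσ' hτ) i,
    le_payoff_of_forall_le_wt_add (hsol.le_wt_combine_add hσ hτ') i⟩

/-- If `(λ, u)` solves the ergodic equation and `u` induces the pair of
policies `(σ, τ)`, then `(σ, τ)` is optimal. -/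
theorem stmt6 (n : ℕ) (E : Finset (Fin n × Fin n)) (VMax : Finset (Fin n))
    (hout : ∀ i : Fin n, ∃ j : Fin n, (i, j) ∈ E)
    (r : {e : Fin n × Fin n // e ∈ E} → ℝ) (lam : ℝ) (u : Fin n → ℝ)
    (hsol : IsErgodicSol E VMax r lam u)
    (σ : {i : Fin n // i ∈ VMax} → Fin n) (τ : {i : Fin n // i ∉ VMax} → Fin n)
    (hind : Induces E VMax r u σ τ) :
    ∀ σ' τ', IsMaxPolicy E VMax σ' → IsMinPolicy E VMax τ' → ∀ i : Fin n,
      payoff E r (combine VMax σ' τ) i ≤ lam ∧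
      lam ≤ payoff E r (combine VMax σ τ') i :=
  stmt6_general n E VMax r lam u hsol σ τ hind
end

section
/- Suppose the graph G of the mean-payoff game is ergodic, i.e., the ergodic equation has a solution for every weight vector. Then for every r ∈ ℝ^E there exists a solution (λ,u) of the ergodic equation and a pair of policies (σ,τ) induced by u such that (σ,τ) ∈ Ξ (the subgraph G^{σ,τ} has exactly one directed cycle). -/
open MeasureTheory

/-!
For generic weights every optimal selector of a solution of the ergodic equation has a unique
cycle: each cycle of the selector has mean weight `λ`, while for generic weights disjoint cycles
have distinct means. The weights `r + t ^ (i + 1)` (on the edges leaving `i`) are generic for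
all but finitely many `t`, and ergodicity provides solutions for them. For a fixed selector `f`
with a unique cycle, the solution of the zero-player equation normalized at a cycle vertex is a
continuous function of the weights, so the weights for which `f` is optimal form a closed set.
There are finitely many selectors, so letting `t → 0` yields such a selector for `r` itself.
-/

namespace Function

variable {α : Type*} {f : α → α} {x y : α}

theorem exists_iterate_mem_periodicPts [Finite α] (f : α → α) (x : α) :
    ∃ m, f^[m] x ∈ periodicPts f := by
  obtain ⟨k, l, hne, heq⟩ := Finite.exists_ne_map_eq_of_infinite (f^[·] x)
  wlog hlt : k < l generalizing k l
  · exact this l k hne.symm heq.symm (hne.lt_or_gt.resolve_left hlt)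
  refine ⟨k, mk_mem_periodicPts (Nat.sub_pos_of_lt hlt) ?_⟩
  rw [IsPeriodicPt, IsFixedPt, ← iterate_add_apply, Nat.sub_add_cancel hlt.le]
  exact heq.symm

theorem exists_iterate_iterate_eq_of_mem_periodicPts (hx : x ∈ periodicPts f) (k : ℕ) :
    ∃ m, f^[m] (f^[k] x) = x := by
  refine ⟨minimalPeriod f x * k - k, ?_⟩
  rw [← iterate_add_apply, Nat.sub_add_cancel
    (Nat.le_mul_of_pos_left k (minimalPeriod_pos_of_mem_periodicPts hx))]
  exact ((isPeriodicPt_minimalPeriod f x).mul_const k).eq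

section orbitFinset

variable [DecidableEq α]

noncomputable def orbitFinset (f : α → α) (x : α) : Finset α :=
  (Finset.range (minimalPeriod f x)).image (f^[·] x)

theorem iterate_mem_orbitFinset {k : ℕ} (hk : k < minimalPeriod f x) :
    f^[k] x ∈ orbitFinset f x :=
  Finset.mem_image_of_mem (f^[·] x) (Finset.mem_range.2 hk)

theorem sum_orbitFinset {M : Type*} [AddCommMonoid M] (g : α → M) :
    ∑ y ∈ orbitFinset f x, g y = ∑ k ∈ Finset.range (minimalPeriod f x), g (f^[k] x) :=
  Finset.sum_image fun _ hk _ hl h =>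
    iterate_injOn_Iio_minimalPeriod (Finset.mem_range.1 hk) (Finset.mem_range.1 hl) h

theorem card_orbitFinset : (orbitFinset f x).card = minimalPeriod f x := by
  simpa using sum_orbitFinset (f := f) (x := x) (fun _ => (1 : ℕ))

theorem disjoint_orbitFinset (hy : y ∈ periodicPts f) (hxy : ∀ k, f^[k] x ≠ y) :
    Disjoint (orbitFinset f x) (orbitFinset f y) := by
  refine Finset.disjoint_left.2 fun z hzx hzy => ?_
  simp only [orbitFinset, Finset.mem_image] at hzx hzy
  obtain ⟨k, -, rfl⟩ := hzx
  obtain ⟨l, -, hl⟩ := hzy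
  obtain ⟨m, hm⟩ := exists_iterate_iterate_eq_of_mem_periodicPts hy l
  exact hxy (m + k) (by rw [iterate_add_apply, ← hl, hm])

end orbitFinset

end Function

namespace MeanPayoff

open Finset Function Polynomial

variable {n : ℕ} {E : Finset (Fin n × Fin n)} {VMax : Finset (Fin n)}
  {r : {e : Fin n × Fin n // e ∈ E} → ℝ} {lam : ℝ} {u : Fin n → ℝ} {f : Fin n → Fin n}

theorem HasUniqueCycle.exists_iterate_eq (hf : HasUniqueCycle f) {c : Fin n}
    (hc : c ∈ periodicPts f) (x : Fin n) : ∃ m, f^[m] x = c := by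
  obtain ⟨k, hk⟩ := exists_iterate_mem_periodicPts f x
  obtain ⟨m, hm⟩ := hf _ _ hk hc
  exact ⟨m + k, by rwa [iterate_add_apply]⟩

@[fun_prop]
theorem continuous_wt (E : Finset (Fin n × Fin n)) (p : Fin n × Fin n) :
    Continuous fun r : {e : Fin n × Fin n // e ∈ E} → ℝ => wt E r p := by
  by_cases h : p ∈ E <;> simp [wt, h, continuous_apply, continuous_const]

theorem IsErgodicSol.exists_isZeroPlayerSol (h : IsErgodicSol E VMax r lam u) :
    ∃ f : Fin n → Fin n, (∀ i, (i, f i) ∈ E) ∧ IsZeroPlayerSol E f r lam u := by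
  have hmem : ∀ i, lam + u i ∈ outVals E r u i := fun i => by
    by_cases hi : i ∈ VMax
    exacts [((h i).1 hi).1, ((h i).2 hi).1]
  choose f hfE hf using hmem
  exact ⟨f, hfE, hf⟩

theorem IsZeroPlayerSol.sub_iterate (h : IsZeroPlayerSol E f r lam u) (x : Fin n) (m : ℕ) :
    u x - u (f^[m] x) = ∑ k ∈ range m, (wt E r (f^[k] x, f (f^[k] x)) - lam) := by
  calc u x - u (f^[m] x) = ∑ k ∈ range m, (u (f^[k] x) - u (f^[k + 1] x)) :=
        (sum_range_sub' (fun k => u (f^[k] x)) m).symm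
    _ = _ := sum_congr rfl fun k _ => by
      rw [iterate_succ_apply']; linarith [h (f^[k] x)]

theorem IsZeroPlayerSol.sum_cycle (h : IsZeroPlayerSol E f r lam u) (x : Fin n) :
    ∑ k ∈ range (minimalPeriod f x), wt E r (f^[k] x, f (f^[k] x)) =
      minimalPeriod f x * lam := by
  have := IsZeroPlayerSol.sub_iterate h x (minimalPeriod f x)
  rw [iterate_minimalPeriod, sub_self, sum_sub_distrib, sum_const, card_range,
    nsmul_eq_mul] at this
  linarith

/-- Applied to the orbits of two disjoint cycles of `g`: these have distinct mean weights. -/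
def IsGeneric (E : Finset (Fin n × Fin n)) (r : {e : Fin n × Fin n // e ∈ E} → ℝ) : Prop :=
  ∀ (g : Fin n → Fin n) (O₁ O₂ : Finset (Fin n)), (∀ x, (x, g x) ∈ E) →
    O₁.Nonempty → O₂.Nonempty → Disjoint O₁ O₂ →
    (#O₂ : ℝ) * ∑ x ∈ O₁, wt E r (x, g x) ≠ #O₁ * ∑ x ∈ O₂, wt E r (x, g x)

theorem IsZeroPlayerSol.hasUniqueCycle (hr : IsGeneric E r) (hfE : ∀ x, (x, f x) ∈ E)
    (h : IsZeroPlayerSol E f r lam u) : HasUniqueCycle f := by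
  intro x y hx hy
  by_contra! hxy
  refine hr f (orbitFinset f x) (orbitFinset f y) hfE
    ⟨x, iterate_mem_orbitFinset (minimalPeriod_pos_of_mem_periodicPts hx)⟩
    ⟨y, iterate_mem_orbitFinset (minimalPeriod_pos_of_mem_periodicPts hy)⟩
    (disjoint_orbitFinset hy hxy) ?_
  simp only [card_orbitFinset, sum_orbitFinset fun z => wt E r (z, f z),
    IsZeroPlayerSol.sum_cycle h]
  ring

theorem finite_setOf_perturbed_sums_eq (a : Fin n → ℝ) {O₁ O₂ : Finset (Fin n)}
    (h₁ : O₁.Nonempty) (h₂ : O₂.Nonempty) (hd : Disjoint O₁ O₂) :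
    {t : ℝ | (#O₂ : ℝ) * ∑ x ∈ O₁, (a x + t ^ (x.val + 1)) =
      #O₁ * ∑ x ∈ O₂, (a x + t ^ (x.val + 1))}.Finite := by
  set P : ℝ[X] := C (#O₂ : ℝ) * ∑ x ∈ O₁, (C (a x) + X ^ (x.val + 1)) -
    C (#O₁ : ℝ) * ∑ x ∈ O₂, (C (a x) + X ^ (x.val + 1))
  obtain ⟨x₁, hx₁⟩ := h₁
  -- the coefficient of `X ^ (x₁ + 1)` only sees the summand `x₁ ∈ O₁`
  have hP : P ≠ 0 := fun hP0 => by
    have := congrArg (coeff · (x₁.val + 1)) hP0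
    simp [P, coeff_X_pow, hx₁, Finset.disjoint_left.1 hd hx₁, Fin.val_inj] at this
    exact h₂.ne_empty this
  refine (finite_setOfPred_isRoot hP).subset fun t ht => ?_
  simp only [Set.mem_ofPred_eq] at ht
  simp [P, eval_finsetSum, ht]

/-- The perturbation depends only on the source vertex of an edge: a selector uses one edge per
vertex, so distinct exponents per vertex already separate the sums in `IsGeneric`. -/
def perturb (E : Finset (Fin n × Fin n)) (r : {e : Fin n × Fin n // e ∈ E} → ℝ) (t : ℝ) :
    {e : Fin n × Fin n // e ∈ E} → ℝ :=
  fun e => r e + t ^ (e.1.1.val + 1)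

theorem perturb_zero : perturb E r 0 = r := by
  ext e
  simp [perturb]

theorem continuous_perturb : Continuous (perturb E r) := by
  unfold perturb
  fun_prop

theorem wt_perturb {t : ℝ} {p : Fin n × Fin n} (hp : p ∈ E) :
    wt E (perturb E r t) p = wt E r p + t ^ (p.1.val + 1) := by
  simp [wt, hp, perturb]

theorem finite_setOf_not_isGeneric_perturb (r : {e : Fin n × Fin n // e ∈ E} → ℝ) :
    {t | ¬IsGeneric E (perturb E r t)}.Finite := by
  let S : Set ((Fin n → Fin n) × Finset (Fin n) × Finset (Fin n)) :=
    {P | (∀ x, (x, P.1 x) ∈ E) ∧ P.2.1.Nonempty ∧ P.2.2.Nonempty ∧ Disjoint P.2.1 P.2.2}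
  refine (S.toFinite.biUnion fun P hP => finite_setOf_perturbed_sums_eq
    (fun x => wt E r (x, P.1 x)) hP.2.1 hP.2.2.1 hP.2.2.2).subset ?_
  intro t ht
  simp only [IsGeneric, not_forall, not_not, Set.mem_ofPred_eq] at ht
  obtain ⟨g, O₁, O₂, hg, h₁, h₂, hd, heq⟩ := ht
  refine Set.mem_biUnion (x := (g, O₁, O₂)) ⟨hg, h₁, h₂, hd⟩ ?_
  simpa only [Set.mem_ofPred_eq, wt_perturb (hg _)] using heq

/-- Stated by equations and non-strict inequalities, unlike `IsErgodicSol`, so that it is a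
closed condition on the weights. -/
def IsOptimalSelector (E : Finset (Fin n × Fin n)) (VMax : Finset (Fin n))
    (r : {e : Fin n × Fin n // e ∈ E} → ℝ) (lam : ℝ) (u : Fin n → ℝ) (f : Fin n → Fin n) :
    Prop :=
  IsZeroPlayerSol E f r lam u ∧
    (∀ i ∈ VMax, ∀ j, (i, j) ∈ E → wt E r (i, j) + u j ≤ lam + u i) ∧
    (∀ i ∉ VMax, ∀ j, (i, j) ∈ E → lam + u i ≤ wt E r (i, j) + u j)

theorem isOptimalSelector_iff (hfE : ∀ i, (i, f i) ∈ E) :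
    IsOptimalSelector E VMax r lam u f ↔
      IsErgodicSol E VMax r lam u ∧ IsZeroPlayerSol E f r lam u := by
  constructor
  · rintro ⟨hf, hmax, hmin⟩
    refine ⟨fun i => ⟨fun hi => ⟨⟨f i, hfE i, hf i⟩, ?_⟩, fun hi => ⟨⟨f i, hfE i, hf i⟩, ?_⟩⟩, hf⟩
    · rintro _ ⟨j, hj, rfl⟩
      exact hmax i hi j hj
    · rintro _ ⟨j, hj, rfl⟩
      exact hmin i hi j hj
  · rintro ⟨hs, hf⟩
    exact ⟨hf, fun i hi j hj => ((hs i).1 hi).2 ⟨j, hj, rfl⟩,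
      fun i hi j hj => ((hs i).2 hi).2 ⟨j, hj, rfl⟩⟩

theorem IsOptimalSelector.sub_const (h : IsOptimalSelector E VMax r lam u f) (a : ℝ) :
    IsOptimalSelector E VMax r lam (fun i => u i - a) f := by
  obtain ⟨hf, hmax, hmin⟩ := h
  refine ⟨fun i => ?_, fun i hi j hj => ?_, fun i hi j hj => ?_⟩
  · linarith [hf i]
  · linarith [hmax i hi j hj]
  · linarith [hmin i hi j hj]

theorem isClosed_setOf_isOptimalSelector {Λ : ({e : Fin n × Fin n // e ∈ E} → ℝ) → ℝ}
    {U : ({e : Fin n × Fin n // e ∈ E} → ℝ) → Fin n → ℝ} (hΛ : Continuous Λ)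
    (hU : Continuous U) :
    IsClosed {r | IsOptimalSelector E VMax r (Λ r) (U r) f} := by
  have hu : ∀ i, Continuous fun r => U r i := fun i => (continuous_apply i).comp hU
  simp only [IsOptimalSelector, IsZeroPlayerSol, Set.ofPred_and, Set.ofPred_forall]
  refine ((isClosed_iInter fun i => isClosed_eq ?_ ?_).inter
    ((isClosed_iInter fun i => isClosed_iInter fun _ => isClosed_iInter fun j =>
      isClosed_iInter fun _ => isClosed_le ?_ ?_).inter
    (isClosed_iInter fun i => isClosed_iInter fun _ => isClosed_iInter fun j =>
      isClosed_iInter fun _ => isClosed_le ?_ ?_))) <;> fun_prop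

/-- Since every vertex reaches the cycle vertex `c`, the solution of the zero-player equation
normalized by `u c = 0` is linear in the weights: `lam` is the cycle mean `Λ`, and `u i` sums
the weights minus `Λ` along the path from `i` to `c`. -/
theorem isClosed_setOf_exists_isOptimalSelector (hf : HasUniqueCycle f) :
    IsClosed {r : {e : Fin n × Fin n // e ∈ E} → ℝ |
      ∃ lam u, IsOptimalSelector E VMax r lam u f} := by
  rcases isEmpty_or_nonempty (Fin n) with hn | ⟨⟨x₀⟩⟩
  · convert isClosed_univ
    refine Set.eq_univ_of_forall fun r => ⟨0, 0, ?_, ?_, ?_⟩ <;> exact fun i => isEmptyElim i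
  obtain ⟨k₀, hc⟩ := exists_iterate_mem_periodicPts f x₀
  set c := f^[k₀] x₀
  choose m hm using HasUniqueCycle.exists_iterate_eq hf hc
  set p := minimalPeriod f c
  let Λ : ({e : Fin n × Fin n // e ∈ E} → ℝ) → ℝ := fun r =>
    (∑ k ∈ range p, wt E r (f^[k] c, f (f^[k] c))) / p
  let U : ({e : Fin n × Fin n // e ∈ E} → ℝ) → Fin n → ℝ := fun r i =>
    ∑ k ∈ range (m i), (wt E r (f^[k] i, f (f^[k] i)) - Λ r)
  have hnorm : ∀ {r lam u}, IsZeroPlayerSol E f r lam u →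
      lam = Λ r ∧ (fun i => u i - u c) = U r := by
    intro r lam u h
    have hlam : lam = Λ r := by
      rw [eq_div_iff (Nat.cast_ne_zero.2 (minimalPeriod_pos_of_mem_periodicPts hc).ne'),
        IsZeroPlayerSol.sum_cycle h, mul_comm]
    refine ⟨hlam, funext fun i => ?_⟩
    simp only [U, ← hlam, ← IsZeroPlayerSol.sub_iterate h i (m i), hm]
  have hset : {r | ∃ lam u, IsOptimalSelector E VMax r lam u f} =
      {r | IsOptimalSelector E VMax r (Λ r) (U r) f} := by
    ext r
    refine ⟨fun ⟨lam, u, h⟩ => ?_, fun h => ⟨_, _, h⟩⟩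
    obtain ⟨rfl, hU⟩ := hnorm h.1
    change IsOptimalSelector E VMax r (Λ r) (U r) f
    exact hU ▸ h.sub_const (u c)
  rw [hset]
  exact isClosed_setOf_isOptimalSelector (by fun_prop) (by fun_prop)

theorem exists_isOptimalSelector_of_isGeneric (herg : IsErgodicGraph E VMax)
    (hr : IsGeneric E r) :
    ∃ f : Fin n → Fin n, ((∀ i, (i, f i) ∈ E) ∧ HasUniqueCycle f) ∧
      ∃ lam u, IsOptimalSelector E VMax r lam u f := by
  obtain ⟨lam, u, hs⟩ := herg r
  obtain ⟨f, hfE, hf⟩ := IsErgodicSol.exists_isZeroPlayerSol hs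
  exact ⟨f, ⟨hfE, IsZeroPlayerSol.hasUniqueCycle hr hfE hf⟩, lam, u,
    (isOptimalSelector_iff hfE).2 ⟨hs, hf⟩⟩

theorem exists_isOptimalSelector_hasUniqueCycle (herg : IsErgodicGraph E VMax)
    (r : {e : Fin n × Fin n // e ∈ E} → ℝ) :
    ∃ f : Fin n → Fin n, ((∀ i, (i, f i) ∈ E) ∧ HasUniqueCycle f) ∧
      ∃ lam u, IsOptimalSelector E VMax r lam u f := by
  set F := {f : Fin n → Fin n | (∀ i, (i, f i) ∈ E) ∧ HasUniqueCycle f}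
  set K := ⋃ f ∈ F, {r' | ∃ lam u, IsOptimalSelector E VMax r' lam u f}
  have hK : IsClosed {t | perturb E r t ∈ K} :=
    (F.toFinite.isClosed_biUnion fun f hf =>
      isClosed_setOf_exists_isOptimalSelector hf.2).preimage continuous_perturb
  have hgen : {t | ¬IsGeneric E (perturb E r t)}ᶜ ⊆ {t | perturb E r t ∈ K} := fun t ht => by
    obtain ⟨f, hf, hopt⟩ := exists_isOptimalSelector_of_isGeneric herg (not_not.1 ht)
    exact Set.mem_biUnion hf hopt
  have h0 := hK.closure_subset_iff.2 hgen
    ((finite_setOf_not_isGeneric_perturb r).countable.dense_compl ℝ 0)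
  simpa [K, F, perturb_zero] using h0

theorem combine_restrict (f : Fin n → Fin n) :
    combine VMax (fun i => f i.1) (fun i => f i.1) = f := by
  funext i
  simp [combine]

theorem induces_restrict (hfE : ∀ i, (i, f i) ∈ E) (hs : IsErgodicSol E VMax r lam u)
    (hf : IsZeroPlayerSol E f r lam u) :
    Induces E VMax r u (fun i => f i.1) (fun i => f i.1) := by
  refine ⟨fun i => hfE i, fun i => hfE i, fun i => ?_, fun i => ?_⟩
  · rw [← hf]
    exact (hs i).1 i.2
  · rw [← hf]
    exact (hs i).2 i.2

end MeanPayoff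

open MeanPayoff

theorem stmt10_general (n : ℕ) (E : Finset (Fin n × Fin n)) (VMax : Finset (Fin n))
    (herg : IsErgodicGraph E VMax) :
    ∀ r : {e : Fin n × Fin n // e ∈ E} → ℝ,
      ∃ (lam : ℝ) (u : Fin n → ℝ) (σ : {i : Fin n // i ∈ VMax} → Fin n)
        (τ : {i : Fin n // i ∉ VMax} → Fin n),
        IsErgodicSol E VMax r lam u ∧ Induces E VMax r u σ τ ∧
        HasUniqueCycle (combine VMax σ τ) := by
  intro r
  obtain ⟨f, ⟨hfE, hf⟩, lam, u, hopt⟩ := exists_isOptimalSelector_hasUniqueCycle herg r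
  obtain ⟨hs, h0⟩ := (isOptimalSelector_iff hfE).1 hopt
  exact ⟨lam, u, _, _, hs, induces_restrict hfE hs h0, (combine_restrict f).symm ▸ hf⟩

/-- If the graph is ergodic, then for every weight vector there exists a
solution of the ergodic equation and a pair of bias-induced policies `(σ,τ) ∈ Ξ`. -/
theorem stmt10 (n : ℕ) (E : Finset (Fin n × Fin n)) (VMax : Finset (Fin n))
    (hout : ∀ i : Fin n, ∃ j : Fin n, (i, j) ∈ E)
    (herg : IsErgodicGraph E VMax) :
    ∀ r : {e : Fin n × Fin n // e ∈ E} → ℝ,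
      ∃ (lam : ℝ) (u : Fin n → ℝ) (σ : {i : Fin n // i ∈ VMax} → Fin n)
        (τ : {i : Fin n // i ∉ VMax} → Fin n),
        IsErgodicSol E VMax r lam u ∧ Induces E VMax r u σ τ ∧
        HasUniqueCycle (combine VMax σ τ) :=
  stmt10_general n E VMax herg
end

section
/- Suppose the graph G is ergodic and r ∈ P^{σ,τ} for some (σ,τ) ∈ Ξ. If (i,j) ∈ E is such that i ∈ V_Min and j ≠ τ(i), then (x, r_{−ij}) ∈ P^{σ,τ} for all x > λ^{σ,τ}(r) + (u^{σ,τ}(r))_i − (u^{σ,τ}(r))_j. Analogously, if (i,j) ∈ E is such that i ∈ V_Max and j ≠ σ(i), then (x, r_{−ij}) ∈ P^{σ,τ} for all x < λ^{σ,τ}(r) + (u^{σ,τ}(r))_i − (u^{σ,τ}(r))_j. -/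
/-!
A weight vector `r` lies in `P^{σ,τ}` exactly when the bias `u^{σ,τ}(r)` makes `σ` and `τ` the
strict argmax and argmin at every vertex. A tie would let a player switch to the other optimal
edge and produce a second bias-induced pair. Conversely, any other solution `v` of the ergodic
equation differs from `u` by a constant: the argmax and the argmin of `v - u` are forward
invariant under the successor map of `G^{σ,τ}`, so both contain its unique cycle.
Strictness is a finite system of strict inequalities, and changing the weight of an edge `(i, j)`
not used by `(σ, τ)` only touches the one comparing it with the chosen edge at `i`, which reads
`x > λ + u_i - u_j` at a Min vertex and `x < λ + u_i - u_j` at a Max vertex.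
-/

open MeasureTheory

section

variable {n : ℕ} {E : Finset (Fin n × Fin n)} {VMax : Finset (Fin n)}
  {r : {e : Fin n × Fin n // e ∈ E} → ℝ}
  {σ : {i : Fin n // i ∈ VMax} → Fin n} {τ : {i : Fin n // i ∉ VMax} → Fin n}

@[simp]
lemma combine_of_mem {i : Fin n} (h : i ∈ VMax) : combine VMax σ τ i = σ ⟨i, h⟩ :=
  dif_pos h

@[simp]
lemma combine_of_not_mem {i : Fin n} (h : i ∉ VMax) : combine VMax σ τ i = τ ⟨i, h⟩ :=
  dif_neg h

lemma combine_mem (hσ : IsMaxPolicy E VMax σ) (hτ : IsMinPolicy E VMax τ) (i : Fin n) :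
    (i, combine VMax σ τ i) ∈ E := by
  by_cases h : i ∈ VMax
  · simpa [h] using hσ ⟨i, h⟩
  · simpa [h] using hτ ⟨i, h⟩

lemma wt_update {q : Fin n × Fin n} (hq : q ∈ E) (x : ℝ) (p : Fin n × Fin n) :
    wt E (Function.update r ⟨q, hq⟩ x) p = if p = q then x else wt E r p := by
  unfold wt
  split_ifs <;> subst_vars <;> simp_all

end

section Cycle

variable {n : ℕ} {f : Fin n → Fin n}

lemma exists_isPeriodicVertex_iterate (f : Fin n → Fin n) (x : Fin n) :
    ∃ a, IsPeriodicVertex f (f^[a] x) := by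
  obtain ⟨a, b, hne, heq⟩ := Finite.exists_ne_map_eq_of_infinite (fun t : ℕ => f^[t] x)
  wlog hab : a < b generalizing a b
  · exact this b a hne.symm heq.symm (by omega)
  refine ⟨a, b - a, by omega, ?_⟩
  rw [← Function.iterate_add_apply, Nat.sub_add_cancel hab.le]
  exact heq.symm

lemma HasUniqueCycle.mem_of_mapsTo (hf : HasUniqueCycle f) {s : Set (Fin n)}
    (hs : Set.MapsTo f s s) {x y : Fin n} (hx : x ∈ s) (hy : IsPeriodicVertex f y) : y ∈ s := by
  obtain ⟨a, ha⟩ := exists_isPeriodicVertex_iterate f x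
  obtain ⟨k, rfl⟩ := hf _ _ ha hy
  exact hs.iterate k (hs.iterate a hx)

lemma HasUniqueCycle.exists_forall_eq [Nonempty (Fin n)] {β : Type*} [LinearOrder β]
    (hf : HasUniqueCycle f) {g : Fin n → β}
    (hmax : Set.MapsTo f {a | ∀ b, g b ≤ g a} {a | ∀ b, g b ≤ g a})
    (hmin : Set.MapsTo f {a | ∀ b, g a ≤ g b} {a | ∀ b, g a ≤ g b}) :
    ∃ c, ∀ a, g a = c := by
  obtain ⟨k, hp⟩ := exists_isPeriodicVertex_iterate f (Classical.arbitrary _)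
  obtain ⟨aM, haM⟩ := Finite.exists_max g
  obtain ⟨am, ham⟩ := Finite.exists_min g
  have hpM := hf.mem_of_mapsTo hmax haM hp
  have hpm := hf.mem_of_mapsTo hmin ham hp
  exact ⟨_, fun a => le_antisymm (hpM a) (hpm a)⟩

end Cycle

section ZeroPlayer

variable {n : ℕ} {E : Finset (Fin n × Fin n)} {VMax : Finset (Fin n)}
  {r : {e : Fin n × Fin n // e ∈ E} → ℝ}
  {σ : {i : Fin n // i ∈ VMax} → Fin n} {τ : {i : Fin n // i ∉ VMax} → Fin n}
  {f : Fin n → Fin n} {lam mu : ℝ} {u v : Fin n → ℝ}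

lemma IsErgodicSol.isZeroPlayerSol (hv : IsErgodicSol E VMax r lam u)
    (hind : Induces E VMax r u σ τ) : IsZeroPlayerSol E (combine VMax σ τ) r lam u := by
  intro i
  by_cases h : i ∈ VMax
  · simpa [h] using ((hv i).1 h).unique (hind.2.2.1 ⟨i, h⟩)
  · simpa [h] using ((hv i).2 h).unique (hind.2.2.2 ⟨i, h⟩)

/-- The difference `v - u` of two solutions changes by `mu - lam` along every edge of `f`, so
its maximum and minimum force `lam = mu`; then it is `f`-invariant, hence constant. -/
lemma IsZeroPlayerSol.eq_add_const [Nonempty (Fin n)] (hf : HasUniqueCycle f)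
    (hu : IsZeroPlayerSol E f r lam u) (hv : IsZeroPlayerSol E f r mu v) :
    mu = lam ∧ ∃ c, ∀ a, v a = u a + c := by
  have hstep : ∀ a, v (f a) - u (f a) = v a - u a + (mu - lam) := fun a => by
    have hua : lam + u a = _ := hu a
    have hva : mu + v a = _ := hv a
    linarith
  obtain ⟨aM, haM⟩ := Finite.exists_max fun a => v a - u a
  obtain ⟨am, ham⟩ := Finite.exists_min fun a => v a - u a
  have hmu : mu = lam := by linarith [hstep aM, hstep am, haM (f aM), ham (f am)]
  subst hmu
  have hinv : ∀ a, v (f a) - u (f a) = v a - u a := fun a => by linarith [hstep a]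
  obtain ⟨c, hc⟩ := hf.exists_forall_eq (g := fun a => v a - u a)
    (fun a ha b => (hinv a).symm ▸ ha b) (fun a ha b => (hinv a).symm ▸ ha b)
  exact ⟨rfl, c, fun a => by linarith [hc a]⟩

end ZeroPlayer

/-- `u` is a bias for `f` under which `f i` is the unique optimal successor of every vertex `i`. -/
def IsStrictBias {n : ℕ} (E : Finset (Fin n × Fin n)) (VMax : Finset (Fin n))
    (r : {e : Fin n × Fin n // e ∈ E} → ℝ) (f : Fin n → Fin n) (lam : ℝ) (u : Fin n → ℝ) :
    Prop :=
  IsZeroPlayerSol E f r lam u ∧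
  ∀ a k, (a, k) ∈ E → k ≠ f a →
    (a ∈ VMax → wt E r (a, k) + u k < lam + u a) ∧ (a ∉ VMax → lam + u a < wt E r (a, k) + u k)

namespace IsStrictBias

variable {n : ℕ} {E : Finset (Fin n × Fin n)} {VMax : Finset (Fin n)}
  {r : {e : Fin n × Fin n // e ∈ E} → ℝ}
  {σ σ' : {i : Fin n // i ∈ VMax} → Fin n} {τ τ' : {i : Fin n // i ∉ VMax} → Fin n}
  {f : Fin n → Fin n} {lam mu : ℝ} {u v : Fin n → ℝ}

lemma le_of_mem (hs : IsStrictBias E VMax r f lam u) {a k : Fin n} (ha : a ∈ VMax)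
    (hk : (a, k) ∈ E) : wt E r (a, k) + u k ≤ lam + u a := by
  rcases eq_or_ne k (f a) with rfl | hne
  · exact (hs.1 a).ge
  · exact ((hs.2 a k hk hne).1 ha).le

lemma ge_of_not_mem (hs : IsStrictBias E VMax r f lam u) {a k : Fin n} (ha : a ∉ VMax)
    (hk : (a, k) ∈ E) : lam + u a ≤ wt E r (a, k) + u k := by
  rcases eq_or_ne k (f a) with rfl | hne
  · exact (hs.1 a).le
  · exact ((hs.2 a k hk hne).2 ha).le

lemma isErgodicSol (hs : IsStrictBias E VMax r f lam u) (hfE : ∀ a, (a, f a) ∈ E) :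
    IsErgodicSol E VMax r lam u := fun a =>
  ⟨fun ha => ⟨⟨f a, hfE a, hs.1 a⟩, by rintro _ ⟨k, hk, rfl⟩; exact hs.le_of_mem ha hk⟩,
    fun ha => ⟨⟨f a, hfE a, hs.1 a⟩, by rintro _ ⟨k, hk, rfl⟩; exact hs.ge_of_not_mem ha hk⟩⟩

lemma induces (hs : IsStrictBias E VMax r (combine VMax σ τ) lam u)
    (hσ : IsMaxPolicy E VMax σ) (hτ : IsMinPolicy E VMax τ) : Induces E VMax r u σ τ := by
  have hv := hs.isErgodicSol (combine_mem hσ hτ)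
  refine ⟨hσ, hτ, fun a => ?_, fun a => ?_⟩
  · simpa [hs.1 a.1, a.2] using (hv a.1).1 a.2
  · simpa [hs.1 a.1, a.2] using (hv a.1).2 a.2

lemma of_add_const {c : ℝ} (hs : IsStrictBias E VMax r f lam v) (hc : ∀ a, v a = u a + c) :
    IsStrictBias E VMax r f lam u := by
  refine ⟨fun a => ?_, fun a k hk hne => ?_⟩
  · have := hs.1 a
    rw [hc, hc] at this
    linarith
  · have := hs.2 a k hk hne
    simp only [hc] at this
    exact ⟨fun ha => by linarith [this.1 ha], fun ha => by linarith [this.2 ha]⟩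

lemma update {i j : Fin n} {x : ℝ} (hs : IsStrictBias E VMax r f lam u) (he : (i, j) ∈ E)
    (hj : j ≠ f i)
    (hx : (i ∈ VMax → x + u j < lam + u i) ∧ (i ∉ VMax → lam + u i < x + u j)) :
    IsStrictBias E VMax (Function.update r ⟨(i, j), he⟩ x) f lam u := by
  refine ⟨fun a => ?_, fun a k hk hne => ?_⟩
  · rw [wt_update, if_neg]
    · exact hs.1 a
    · rintro ⟨⟩
      exact hj rfl
  · rw [wt_update]
    split_ifs with hak
    · obtain ⟨rfl, rfl⟩ := Prod.mk.inj hak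
      exact hx
    · exact hs.2 a k hk hne


lemma argmax_step (hs : IsStrictBias E VMax r f lam u) (hfE : ∀ a, (a, f a) ∈ E)
    (hv : IsErgodicSol E VMax r mu v) {a : Fin n} (ha : ∀ b, v b - u b ≤ v a - u a) :
    mu ≤ lam ∧ (mu = lam → ∀ b, v b - u b ≤ v (f a) - u (f a)) := by
  have hfa := hs.1 a
  by_cases h : a ∈ VMax
  · obtain ⟨⟨k, hk, hkv⟩, -⟩ := (hv a).1 h
    have hku := hs.le_of_mem h hk
    refine ⟨by linarith [ha k], fun hmu b => ?_⟩
    rcases eq_or_ne k (f a) with rfl | hne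
    · linarith [ha b]
    · linarith [(hs.2 a k hk hne).1 h, ha k]
  · have hvf := ((hv a).2 h).2 ⟨f a, hfE a, rfl⟩
    exact ⟨by linarith [ha (f a)], fun hmu b => by linarith [ha b]⟩

lemma argmin_step (hs : IsStrictBias E VMax r f lam u) (hfE : ∀ a, (a, f a) ∈ E)
    (hv : IsErgodicSol E VMax r mu v) {a : Fin n} (ha : ∀ b, v a - u a ≤ v b - u b) :
    lam ≤ mu ∧ (mu = lam → ∀ b, v (f a) - u (f a) ≤ v b - u b) := by
  have hfa := hs.1 a
  by_cases h : a ∈ VMax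
  · have hvf := ((hv a).1 h).2 ⟨f a, hfE a, rfl⟩
    exact ⟨by linarith [ha (f a)], fun hmu b => by linarith [ha b]⟩
  · obtain ⟨⟨k, hk, hkv⟩, -⟩ := (hv a).2 h
    have hku := hs.ge_of_not_mem h hk
    refine ⟨by linarith [ha k], fun hmu b => ?_⟩
    rcases eq_or_ne k (f a) with rfl | hne
    · linarith [ha b]
    · linarith [(hs.2 a k hk hne).2 h, ha k]

lemma eq_add_const_of_isErgodicSol [Nonempty (Fin n)] (hs : IsStrictBias E VMax r f lam u)
    (hfE : ∀ a, (a, f a) ∈ E) (hf : HasUniqueCycle f) (hv : IsErgodicSol E VMax r mu v) :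
    mu = lam ∧ ∃ c, ∀ a, v a = u a + c := by
  obtain ⟨aM, haM⟩ := Finite.exists_max fun a => v a - u a
  obtain ⟨am, ham⟩ := Finite.exists_min fun a => v a - u a
  have hmu : mu = lam :=
    le_antisymm (hs.argmax_step hfE hv haM).1 (hs.argmin_step hfE hv ham).1
  obtain ⟨c, hc⟩ := hf.exists_forall_eq (g := fun a => v a - u a)
    (fun a ha => (hs.argmax_step hfE hv ha).2 hmu) (fun a ha => (hs.argmin_step hfE hv ha).2 hmu)
  exact ⟨hmu, c, fun a => by linarith [hc a]⟩

lemma eq_of_induces {c : ℝ} (hs : IsStrictBias E VMax r (combine VMax σ τ) lam u)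
    (hσ : IsMaxPolicy E VMax σ) (hτ : IsMinPolicy E VMax τ) (hc : ∀ a, v a = u a + c)
    (hind : Induces E VMax r v σ' τ') : σ' = σ ∧ τ' = τ := by
  constructor
  · funext ⟨a, ha⟩
    by_contra hne
    have hopt := (hind.2.2.1 ⟨a, ha⟩).2 ⟨_, hσ ⟨a, ha⟩, rfl⟩
    have hlt := (hs.2 a _ (hind.1 ⟨a, ha⟩) (by simpa [ha] using hne)).1 ha
    have hfa := hs.1 a
    simp only [combine_of_mem ha, hc] at hopt hfa
    linarith
  · funext ⟨a, ha⟩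
    by_contra hne
    have hopt := (hind.2.2.2 ⟨a, ha⟩).2 ⟨_, hτ ⟨a, ha⟩, rfl⟩
    have hlt := (hs.2 a _ (hind.2.1 ⟨a, ha⟩) (by simpa [ha] using hne)).2 ha
    have hfa := hs.1 a
    simp only [combine_of_not_mem ha, hc] at hopt hfa
    linarith

lemma mem_Pcell [Nonempty (Fin n)] (hs : IsStrictBias E VMax r (combine VMax σ τ) lam u)
    (hXi : InXi E VMax σ τ) : r ∈ Pcell E VMax σ τ := by
  obtain ⟨hσ, hτ, hf⟩ := hXi
  refine ⟨⟨lam, u, hs.isErgodicSol (combine_mem hσ hτ), hs.induces hσ hτ⟩, ?_⟩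
  rintro σ' τ' ⟨mu, v, hv, hind⟩
  obtain ⟨-, c, hc⟩ := hs.eq_add_const_of_isErgodicSol (combine_mem hσ hτ) hf hv
  exact hs.eq_of_induces hσ hτ hc hind

end IsStrictBias

section Cell

variable {n : ℕ} {E : Finset (Fin n × Fin n)} {VMax : Finset (Fin n)}
  {r : {e : Fin n × Fin n // e ∈ E} → ℝ}
  {σ : {i : Fin n // i ∈ VMax} → Fin n} {τ : {i : Fin n // i ∉ VMax} → Fin n}
  {lam : ℝ} {u : Fin n → ℝ}

lemma Induces.update_max (hind : Induces E VMax r u σ τ) {a : {i : Fin n // i ∈ VMax}}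
    {k : Fin n} (hk : (a.1, k) ∈ E)
    (hopt : IsGreatest (outVals E r u a.1) (wt E r (a.1, k) + u k)) :
    Induces E VMax r u (Function.update σ a k) τ := by
  obtain ⟨hσ, hτ, hσopt, hτopt⟩ := hind
  exact ⟨(Function.forall_update_iff σ fun i y => (i.1, y) ∈ E).2 ⟨hk, fun i _ => hσ i⟩, hτ,
    (Function.forall_update_iff σ fun i y =>
      IsGreatest (outVals E r u i.1) (wt E r (i.1, y) + u y)).2 ⟨hopt, fun i _ => hσopt i⟩,
    hτopt⟩

lemma Induces.update_min (hind : Induces E VMax r u σ τ) {a : {i : Fin n // i ∉ VMax}}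
    {k : Fin n} (hk : (a.1, k) ∈ E)
    (hopt : IsLeast (outVals E r u a.1) (wt E r (a.1, k) + u k)) :
    Induces E VMax r u σ (Function.update τ a k) := by
  obtain ⟨hσ, hτ, hσopt, hτopt⟩ := hind
  exact ⟨hσ, (Function.forall_update_iff τ fun i y => (i.1, y) ∈ E).2 ⟨hk, fun i _ => hτ i⟩,
    hσopt, (Function.forall_update_iff τ fun i y =>
      IsLeast (outVals E r u i.1) (wt E r (i.1, y) + u y)).2 ⟨hopt, fun i _ => hτopt i⟩⟩

lemma isStrictBias_of_mem_Pcell (hr : r ∈ Pcell E VMax σ τ) (hv : IsErgodicSol E VMax r lam u)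
    (hind : Induces E VMax r u σ τ) : IsStrictBias E VMax r (combine VMax σ τ) lam u := by
  refine ⟨hv.isZeroPlayerSol hind, fun a k hk hne => ⟨fun ha => ?_, fun ha => ?_⟩⟩
  · refine (((hv a).1 ha).2 ⟨k, hk, rfl⟩).lt_of_ne fun heq => hne ?_
    have hb : BiasInduced E VMax r (Function.update σ ⟨a, ha⟩ k) τ :=
      ⟨lam, u, hv, hind.update_max hk (heq ▸ (hv a).1 ha)⟩
    simpa [ha] using congrFun (hr.2 _ _ hb).1 ⟨a, ha⟩
  · refine (((hv a).2 ha).2 ⟨k, hk, rfl⟩).lt_of_ne' fun heq => hne ?_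
    have hb : BiasInduced E VMax r σ (Function.update τ ⟨a, ha⟩ k) :=
      ⟨lam, u, hv, hind.update_min hk (heq ▸ (hv a).2 ha)⟩
    simpa [ha] using congrFun (hr.2 _ _ hb).2 ⟨a, ha⟩

lemma IsZeroPlayerSol.isStrictBias_of_mem_Pcell [Nonempty (Fin n)] (hXi : InXi E VMax σ τ)
    (hr : r ∈ Pcell E VMax σ τ) (hu : IsZeroPlayerSol E (combine VMax σ τ) r lam u) :
    IsStrictBias E VMax r (combine VMax σ τ) lam u := by
  obtain ⟨lam₀, u₀, hv, hind⟩ := hr.1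
  obtain ⟨rfl, c, hc⟩ := hu.eq_add_const hXi.2.2 (hv.isZeroPlayerSol hind)
  exact (isStrictBias_of_mem_Pcell hr hv hind).of_add_const hc

end Cell

theorem stmt12_general (n : ℕ) (E : Finset (Fin n × Fin n)) (VMax : Finset (Fin n))
    (σ : {i : Fin n // i ∈ VMax} → Fin n) (τ : {i : Fin n // i ∉ VMax} → Fin n)
    (hXi : InXi E VMax σ τ)
    (r : {e : Fin n × Fin n // e ∈ E} → ℝ) (hr : r ∈ Pcell E VMax σ τ)
    (lam : ℝ) (u : Fin n → ℝ)
    (hnorm : IsNormalizedSol E (combine VMax σ τ) r lam u) :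
    ∀ (i j : Fin n) (he : (i, j) ∈ E),
      (∀ h : i ∉ VMax, τ ⟨i, h⟩ ≠ j → ∀ x : ℝ, lam + u i - u j < x →
        Function.update r ⟨(i, j), he⟩ x ∈ Pcell E VMax σ τ) ∧
      (∀ h : i ∈ VMax, σ ⟨i, h⟩ ≠ j → ∀ x : ℝ, x < lam + u i - u j →
        Function.update r ⟨(i, j), he⟩ x ∈ Pcell E VMax σ τ) := by
  intro i j he
  have : Nonempty (Fin n) := ⟨i⟩
  have hs := hnorm.1.isStrictBias_of_mem_Pcell hXi hr
  refine ⟨fun h hj x hx => ?_, fun h hj x hx => ?_⟩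
  · refine (hs.update he ?_ ⟨fun h' => absurd h' h, fun _ => by linarith⟩).mem_Pcell hXi
    simpa [h] using hj.symm
  · refine (hs.update he ?_ ⟨fun _ => by linarith, fun h' => absurd h h'⟩).mem_Pcell hXi
    simpa [h] using hj.symm

/-- Stability of the cell `P^{σ,τ}` under one-sided modification of the
weight of an edge unused by `(σ,τ)`: for a Min edge, increasing the weight beyond
`λ^{σ,τ}(r) + u^{σ,τ}(r)_i − u^{σ,τ}(r)_j` keeps us in the cell, and symmetrically for
Max. Here `(lam, u)` is the normalized solution characterizing
`(λ^{σ,τ}(r), u^{σ,τ}(r))`. -/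
theorem stmt12 (n : ℕ) (E : Finset (Fin n × Fin n)) (VMax : Finset (Fin n))
    (hout : ∀ i : Fin n, ∃ j : Fin n, (i, j) ∈ E)
    (herg : IsErgodicGraph E VMax)
    (σ : {i : Fin n // i ∈ VMax} → Fin n) (τ : {i : Fin n // i ∉ VMax} → Fin n)
    (hXi : InXi E VMax σ τ)
    (r : {e : Fin n × Fin n // e ∈ E} → ℝ) (hr : r ∈ Pcell E VMax σ τ)
    (lam : ℝ) (u : Fin n → ℝ)
    (hnorm : IsNormalizedSol E (combine VMax σ τ) r lam u) :
    ∀ (i j : Fin n) (he : (i, j) ∈ E),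
      (∀ h : i ∉ VMax, τ ⟨i, h⟩ ≠ j → ∀ x : ℝ, lam + u i - u j < x →
        Function.update r ⟨(i, j), he⟩ x ∈ Pcell E VMax σ τ) ∧
      (∀ h : i ∈ VMax, σ ⟨i, h⟩ ≠ j → ∀ x : ℝ, x < lam + u i - u j →
        Function.update r ⟨(i, j), he⟩ x ∈ Pcell E VMax σ τ) :=
  stmt12_general n E VMax σ τ hXi r hr lam u hnorm
end
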